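/- Let T = [[1,0],[1,1]] ∈ SL₂(ℝ). If a polynomial function p in the four matrix entries (with real coefficients) vanishes on the conjugacy class {g T g⁻¹ : g ∈ SL₂(ℝ)}, then p vanishes on every A ∈ SL₂(ℝ) with tr A = 2. (Thus the Zariski closure of the positive-unipotent class contains the identity and the negative-unipotent class.) -/

import Mathlib

open Matrix
open scoped MatrixGroups

noncomputable def posUnipotentT : SL(2, ℝ) :=
  ⟨!![1, 0; 1, 1], by norm_num [Matrix.det_fin_two_of]⟩

/-! Conjugating `T = 1 + E₂₁` by `g` gives `1 + u vᵀ`, where `u = (b, d)` is the second column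
of `g` and `v = (d, -b)`. Replacing `u` by `√t • u` shows that the class contains `1 + t u vᵀ` for
all `t > 0`; a polynomial vanishing at infinitely many points of a line vanishes on all of it, so
also at `t ≤ 0`. Finally every trace-2 element of `SL₂` is of the form `1 + t u vᵀ`. -/

theorem MvPolynomial.eval_add_smul_eq_zero_of_infinite {R σ : Type*} [CommRing R] [IsDomain R]
    (p : MvPolynomial σ R) (x v : σ → R) {S : Set R} (hS : S.Infinite)
    (h : ∀ s ∈ S, eval (x + s • v) p = 0) (t : R) : eval (x + t • v) p = 0 := by
  set q : Polynomial R :=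
    aeval (fun i => Polynomial.C (x i) + Polynomial.X * Polynomial.C (v i)) p
  have hq : ∀ s, q.eval s = eval (x + s • v) p := fun s => by
    rw [← Polynomial.coe_aeval_eq_eval, comp_aeval_apply, ← coe_aeval_eq_eval]
    simp only [map_add, map_mul, Polynomial.aeval_C, Polynomial.aeval_X, Algebra.algebraMap_self,
      RingHom.id_apply]
    rfl
  have hq0 : q = 0 := Polynomial.eq_zero_of_infinite_isRoot q <|
    hS.mono fun s hs => by simp [Polynomial.IsRoot, hq, h s hs]
  rw [← hq, hq0, Polynomial.eval_zero]

theorem vecMulVec_mul_pair {R : Type*} [CommRing R] (s b d : R) :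
    vecMulVec ![s * b, s * d] ![s * d, -(s * b)] = s ^ 2 • vecMulVec ![b, d] ![d, -b] := by
  ext i j; fin_cases i <;> fin_cases j <;> simp [vecMulVec_apply] <;> ring

theorem coe_conj_posUnipotentT (g : SL(2, ℝ)) :
    ((g * posUnipotentT * g⁻¹ : SL(2, ℝ)) : Matrix (Fin 2) (Fin 2) ℝ) =
      1 + vecMulVec ![g 0 1, g 1 1] ![g 1 1, -g 0 1] := by
  have hdet := g.det_coe
  rw [det_fin_two] at hdet
  simp only [Matrix.SpecialLinearGroup.coe_mul, Matrix.SpecialLinearGroup.coe_inv, adjugate_fin_two]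
  ext i j; fin_cases i <;> fin_cases j <;>
    simp [posUnipotentT, Matrix.mul_apply, Fin.sum_univ_two] <;> linarith

theorem Matrix.SpecialLinearGroup.exists_col_one_eq {K : Type*} [Field K] {b d : K}
    (h : b ≠ 0 ∨ d ≠ 0) : ∃ g : SL(2, K), g 0 1 = b ∧ g 1 1 = d := by
  rcases h with hb | hd
  · exact ⟨⟨!![0, b; -b⁻¹, d], by simp [det_fin_two_of, hb]⟩, rfl, rfl⟩
  · exact ⟨⟨!![d⁻¹, b; 0, d], by simp [det_fin_two_of, hd]⟩, rfl, rfl⟩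

theorem exists_eq_one_add_smul_vecMulVec_of_trace_eq_two {K : Type*} [Field K]
    (A : Matrix (Fin 2) (Fin 2) K) (hdet : A.det = 1) (htr : A.trace = 2) :
    ∃ b d t : K, (b ≠ 0 ∨ d ≠ 0) ∧ A = 1 + t • vecMulVec ![b, d] ![d, -b] := by
  obtain ⟨a, b, c, d, rfl⟩ : ∃ a b c d, A = !![a, b; c, d] := ⟨_, _, _, _, A.eta_fin_two⟩
  rw [trace_fin_two_of] at htr
  obtain rfl : d = 2 - a := by linear_combination htr
  rw [det_fin_two_of] at hdet
  have hnil : (a - 1) ^ 2 + b * c = 0 := by linear_combination -hdet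
  by_cases hc : c = 0
  · have ha : a = 1 := by simpa [hc, sub_eq_zero] using hnil
    refine ⟨1, 0, -b, Or.inl one_ne_zero, ?_⟩
    ext i j; fin_cases i <;> fin_cases j <;> norm_num [vecMulVec_apply, hc, ha]
  · refine ⟨a - 1, c, c⁻¹, Or.inr hc, ?_⟩
    ext i j; fin_cases i <;> fin_cases j <;> simp <;> field_simp <;>
      first | ring1 | linear_combination hnil

theorem eval_one_add_smul_vecMulVec_eq_zero (p : MvPolynomial (Fin 2 × Fin 2) ℝ)
    (hp : ∀ g : SL(2, ℝ),
      MvPolynomial.eval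
        (fun ij => ((g * posUnipotentT * g⁻¹ : SL(2, ℝ)) : Matrix (Fin 2) (Fin 2) ℝ) ij.1 ij.2)
        p = 0)
    {b d : ℝ} (hbd : b ≠ 0 ∨ d ≠ 0) (t : ℝ) :
    MvPolynomial.eval
      (fun ij => (1 + t • vecMulVec ![b, d] ![d, -b] : Matrix (Fin 2) (Fin 2) ℝ) ij.1 ij.2)
      p = 0 := by
  refine p.eval_add_smul_eq_zero_of_infinite (fun ij => (1 : Matrix (Fin 2) (Fin 2) ℝ) ij.1 ij.2)
    (fun ij => vecMulVec ![b, d] ![d, -b] ij.1 ij.2) (Set.Ioi_infinite 0) (fun s hs => ?_) t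
  have hsqrt : √s ≠ 0 := (Real.sqrt_pos.2 hs).ne'
  obtain ⟨g, hgb, hgd⟩ := SpecialLinearGroup.exists_col_one_eq
    (hbd.imp (mul_ne_zero hsqrt) (mul_ne_zero hsqrt))
  have hg := hp g
  rwa [coe_conj_posUnipotentT, hgb, hgd, vecMulVec_mul_pair, Real.sq_sqrt hs.le] at hg

/-- A real polynomial in the four matrix entries vanishing on the `SL₂(ℝ)`-conjugacy class of
`T = [[1,0],[1,1]]` vanishes on every `A ∈ SL₂(ℝ)` with `tr A = 2`: the Zariski closure of the
positive-unipotent class contains the identity and the negative-unipotent class. -/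
theorem zariski_closure_posUnipotent_class
    (p : MvPolynomial (Fin 2 × Fin 2) ℝ)
    (hp : ∀ g : SL(2, ℝ),
      MvPolynomial.eval
        (fun ij => ((g * posUnipotentT * g⁻¹ : SL(2, ℝ)) : Matrix (Fin 2) (Fin 2) ℝ) ij.1 ij.2)
        p = 0) :
    ∀ A : SL(2, ℝ), (A : Matrix (Fin 2) (Fin 2) ℝ).trace = 2 →
      MvPolynomial.eval (fun ij => (A : Matrix (Fin 2) (Fin 2) ℝ) ij.1 ij.2) p = 0 := by
  intro A hA
  obtain ⟨b, d, t, hbd, hAt⟩ := exists_eq_one_add_smul_vecMulVec_of_trace_eq_two _ A.det_coe hA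
  rw [hAt]
  exact eval_one_add_smul_vecMulVec_eq_zero p hp hbd t
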